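/- arXiv:2506.00889 — 10 statements merged into one kernel-verified Lean document; each statement's English description precedes it below -/
import Mathlib

section
/- (Lemma 1, case RR > 1.) Let 0 < p_0 < p_1 < 1. Then for every λ with 0 ≤ λ ≤ 1, the risk ratio RR = p_1/p_0 satisfies RR < WR(λ), where WR(λ) := W_λ(p_1)/W_λ(p_0). Consequently B(λ) := max{RR/WR(λ), WR(λ)/RR} equals WR(λ)/RR. -/
/-- The Aranda-Ordaz transformation `W_λ(θ)`: equals `((1-θ)^(-λ) - 1)/λ` for `λ ≠ 0`
and `-log(1-θ)` for `λ = 0`. -/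
noncomputable def arandaOrdaz (l θ : ℝ) : ℝ :=
  if l = 0 then -Real.log (1 - θ) else ((1 - θ) ^ (-l) - 1) / l

/-- The transformation-based ratio `WR(λ) = W_λ(p₁)/W_λ(p₀)`. -/
noncomputable def WR (p₀ p₁ l : ℝ) : ℝ := arandaOrdaz l p₁ / arandaOrdaz l p₀

/-- The relative discrepancy `B(λ) = max{RR/WR(λ), WR(λ)/RR}` with `RR = p₁/p₀`. -/
noncomputable def B (p₀ p₁ l : ℝ) : ℝ :=
  max ((p₁ / p₀) / WR p₀ p₁ l) (WR p₀ p₁ l / (p₁ / p₀))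

/-! Every `W_λ` vanishes at `0` and has derivative `(1 - θ)^(-(λ + 1))` on `θ < 1`, so for
`λ > -1` it is strictly convex there. A strictly convex function through the origin has
strictly increasing slopes `W_λ(p)/p`, and `W_λ(p₀)/p₀ < W_λ(p₁)/p₁` rearranges to `RR < WR(λ)`. -/

namespace arandaOrdaz

@[simp]
lemma apply_zero (l : ℝ) : arandaOrdaz l 0 = 0 := by
  unfold arandaOrdaz
  split_ifs <;> simp

lemma hasDerivAt (l : ℝ) {x : ℝ} (hx : x < 1) :
    HasDerivAt (arandaOrdaz l) ((1 - x) ^ (-(l + 1))) x := by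
  have hbase : HasDerivAt (fun y : ℝ => 1 - y) (-1) x := by
    simpa using (hasDerivAt_id x).const_sub 1
  have hne : (1 - x) ≠ 0 := by linarith
  by_cases hl : l = 0
  · have hlog := (hbase.log hne).neg
    unfold arandaOrdaz
    simp only [hl, if_true]
    refine hlog.congr_deriv ?_
    rw [zero_add, Real.rpow_neg_one]
    ring
  · have hpow := ((hbase.rpow_const (p := -l) (Or.inl hne)).sub_const 1).div_const l
    unfold arandaOrdaz
    simp only [hl, if_false]
    refine hpow.congr_deriv ?_
    rw [show -l - 1 = -(l + 1) by ring]
    field_simp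

lemma continuousOn_Iio (l : ℝ) : ContinuousOn (arandaOrdaz l) (Set.Iio 1) :=
  fun _ hx => (hasDerivAt l hx).continuousAt.continuousWithinAt

lemma deriv_eq (l : ℝ) {x : ℝ} (hx : x < 1) : deriv (arandaOrdaz l) x = (1 - x) ^ (-(l + 1)) :=
  (hasDerivAt l hx).deriv

lemma strictMonoOn_Iio (l : ℝ) : StrictMonoOn (arandaOrdaz l) (Set.Iio 1) := by
  refine strictMonoOn_of_deriv_pos (convex_Iio 1) (continuousOn_Iio l) fun x hx => ?_
  rw [interior_Iio] at hx
  rw [deriv_eq l hx]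
  exact Real.rpow_pos_of_pos (by linarith [Set.mem_Iio.mp hx]) _

lemma pos {l p : ℝ} (h0 : 0 < p) (h1 : p < 1) : 0 < arandaOrdaz l p := by
  simpa using strictMonoOn_Iio l (Set.mem_Iio.mpr (by linarith)) (Set.mem_Iio.mpr h1) h0

lemma strictConvexOn_Iio {l : ℝ} (hl : -1 < l) :
    StrictConvexOn ℝ (Set.Iio 1) (arandaOrdaz l) := by
  refine StrictMonoOn.strictConvexOn_of_deriv (convex_Iio 1) (continuousOn_Iio l) ?_
  rw [interior_Iio]
  intro x hx y hy hxy
  rw [deriv_eq l hx, deriv_eq l hy]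
  exact Real.rpow_lt_rpow_of_neg (by linarith [Set.mem_Iio.mp hy]) (by linarith) (by linarith)

lemma div_lt_div {l p₀ p₁ : ℝ} (hl : -1 < l) (h0 : 0 < p₀) (h01 : p₀ < p₁) (h1 : p₁ < 1) :
    arandaOrdaz l p₀ / p₀ < arandaOrdaz l p₁ / p₁ := by
  have hsec := (strictConvexOn_Iio hl).secant_strict_mono (a := 0)
    (Set.mem_Iio.mpr one_pos) (Set.mem_Iio.mpr (h01.trans h1)) (Set.mem_Iio.mpr h1)
    h0.ne' (h0.trans h01).ne' h01
  simpa using hsec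

end arandaOrdaz

lemma div_lt_WR {l p₀ p₁ : ℝ} (hl : -1 < l) (h0 : 0 < p₀) (h01 : p₀ < p₁) (h1 : p₁ < 1) :
    p₁ / p₀ < WR p₀ p₁ l := by
  have hW₀ := arandaOrdaz.pos (l := l) h0 (h01.trans h1)
  have hslopes := arandaOrdaz.div_lt_div hl h0 h01 h1
  rw [div_lt_div_iff₀ h0 (h0.trans h01)] at hslopes
  rw [WR, div_lt_div_iff₀ h0 hW₀]
  linarith

lemma max_div_div_eq_right {a b : ℝ} (ha : 0 < a) (hab : a < b) : max (a / b) (b / a) = b / a :=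
  max_eq_right <| ((div_lt_one (ha.trans hab)).mpr hab).le.trans ((one_lt_div ha).mpr hab).le

/-- Lemma 1, case RR > 1: if `0 < p₀ < p₁ < 1`, then for all `λ ∈ [0,1]`,
`RR < WR(λ)`, and consequently `B(λ) = WR(λ)/RR`. -/
theorem lemma1_RR_gt_one (p₀ p₁ : ℝ) (h0 : 0 < p₀) (h01 : p₀ < p₁) (h1 : p₁ < 1) :
    ∀ l : ℝ, 0 ≤ l → l ≤ 1 →
      p₁ / p₀ < WR p₀ p₁ l ∧ B p₀ p₁ l = WR p₀ p₁ l / (p₁ / p₀) := by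
  intro l hl _
  have hRR : p₁ / p₀ < WR p₀ p₁ l := div_lt_WR (by linarith) h0 h01 h1
  exact ⟨hRR, max_div_div_eq_right (div_pos (h0.trans h01) h0) hRR⟩
end

section
/- (Lemma 1, case RR < 1.) Let 0 < p_1 < p_0 < 1. Then for every λ with 0 ≤ λ ≤ 1, the transformation-based ratio WR(λ) := W_λ(p_1)/W_λ(p_0) satisfies WR(λ) < RR, where RR = p_1/p_0. Consequently B(λ) := max{RR/WR(λ), WR(λ)/RR} equals RR/WR(λ). -/
open Set

theorem StrictConvexOn.div_lt_div_of_map_zero {𝕜 : Type*} [Field 𝕜] [LinearOrder 𝕜]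
    [IsStrictOrderedRing 𝕜] {s : Set 𝕜} {f : 𝕜 → 𝕜} (hf : StrictConvexOn 𝕜 s f) (h0 : 0 ∈ s)
    (hf0 : f 0 = 0) {x y : 𝕜} (hx : x ∈ s) (hy : y ∈ s) (hx0 : 0 < x) (hxy : x < y) :
    f x / x < f y / y := by
  simpa [hf0] using hf.secant_strict_mono h0 hx hy hx0.ne' (hx0.trans hxy).ne' hxy

theorem max_div_div_eq_left_of_lt {𝕜 : Type*} [Field 𝕜] [LinearOrder 𝕜]
    [IsStrictOrderedRing 𝕜] {a b : 𝕜} (ha : 0 < a) (hab : a < b) :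
    max (b / a) (a / b) = b / a := by
  have hb : 0 < b := ha.trans hab
  apply max_eq_left
  calc a / b ≤ 1 := (div_le_one hb).mpr hab.le
    _ ≤ b / a := (one_le_div ha).mpr hab.le

theorem arandaOrdaz_zero (l : ℝ) : arandaOrdaz l 0 = 0 := by
  by_cases hl : l = 0 <;> simp [arandaOrdaz, hl]

theorem hasDerivAt_arandaOrdaz (l : ℝ) {x : ℝ} (hx : x < 1) :
    HasDerivAt (arandaOrdaz l) ((1 - x) ^ (-(l + 1))) x := by
  have hx' : 1 - x ≠ 0 := (sub_pos.mpr hx).ne'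
  have hsub : HasDerivAt (fun y : ℝ => 1 - y) (-1) x := by
    simpa using (hasDerivAt_id x).const_sub 1
  by_cases hl : l = 0
  · have hW : arandaOrdaz l = fun y => -Real.log (1 - y) := by
      funext y; simp [arandaOrdaz, hl]
    rw [hW, hl, zero_add, Real.rpow_neg_one]
    refine ((Real.hasDerivAt_log hx').comp x hsub).neg.congr_deriv ?_
    ring
  · have hW : arandaOrdaz l = fun y => ((1 - y) ^ (-l) - 1) / l := by
      funext y; simp [arandaOrdaz, hl]
    rw [hW]
    refine (((Real.hasDerivAt_rpow_const (p := -l) (Or.inl hx')).comp x hsub).sub_const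
      1).div_const l |>.congr_deriv ?_
    rw [show -(l + 1) = -l - 1 by ring]
    field_simp

theorem continuousOn_arandaOrdaz (l : ℝ) : ContinuousOn (arandaOrdaz l) (Iio 1) :=
  fun _ hx => (hasDerivAt_arandaOrdaz l hx).continuousAt.continuousWithinAt

theorem strictMonoOn_arandaOrdaz (l : ℝ) : StrictMonoOn (arandaOrdaz l) (Iio 1) := by
  refine strictMonoOn_of_deriv_pos (convex_Iio 1) (continuousOn_arandaOrdaz l) fun x hx => ?_
  rw [interior_Iio] at hx
  rw [(hasDerivAt_arandaOrdaz l hx).deriv]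
  exact Real.rpow_pos_of_pos (sub_pos.mpr hx) _

theorem arandaOrdaz_pos (l : ℝ) {x : ℝ} (hx0 : 0 < x) (hx1 : x < 1) : 0 < arandaOrdaz l x := by
  simpa [arandaOrdaz_zero] using
    strictMonoOn_arandaOrdaz l (mem_Iio.mpr (zero_lt_one' ℝ)) hx1 hx0

theorem strictConvexOn_arandaOrdaz {l : ℝ} (hl : -1 < l) :
    StrictConvexOn ℝ (Iio 1) (arandaOrdaz l) := by
  refine StrictMonoOn.strictConvexOn_of_deriv (convex_Iio 1) (continuousOn_arandaOrdaz l) ?_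
  rw [interior_Iio]
  intro x hx y hy hxy
  rw [(hasDerivAt_arandaOrdaz l hx).deriv, (hasDerivAt_arandaOrdaz l hy).deriv]
  exact Real.rpow_lt_rpow_of_neg (sub_pos.mpr hy) (by linarith) (by linarith)

/-- Lemma 1, case RR < 1: if `0 < p₁ < p₀ < 1`, then for all `λ ∈ [0,1]`,
`WR(λ) < RR`, and consequently `B(λ) = RR/WR(λ)`. -/
theorem lemma1_RR_lt_one (p₀ p₁ : ℝ) (h0 : 0 < p₁) (h10 : p₁ < p₀) (h1 : p₀ < 1) :
    ∀ l : ℝ, 0 ≤ l → l ≤ 1 →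
      WR p₀ p₁ l < p₁ / p₀ ∧ B p₀ p₁ l = (p₁ / p₀) / WR p₀ p₁ l := by
  intro l hl _
  have hp₀ : 0 < p₀ := h0.trans h10
  have hW₀ : 0 < arandaOrdaz l p₀ := arandaOrdaz_pos l hp₀ h1
  have hslope : arandaOrdaz l p₁ / p₁ < arandaOrdaz l p₀ / p₀ :=
    (strictConvexOn_arandaOrdaz (by linarith)).div_lt_div_of_map_zero (by norm_num)
      (arandaOrdaz_zero l) (h10.trans h1) h1 h0 h10
  have hWR : WR p₀ p₁ l < p₁ / p₀ := by
    rw [div_lt_div_iff₀ h0 hp₀] at hslope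
    rw [WR, div_lt_div_iff₀ hW₀ hp₀]
    linarith
  have hWR_pos : 0 < WR p₀ p₁ l := div_pos (arandaOrdaz_pos l h0 (h10.trans h1)) hW₀
  exact ⟨hWR, max_div_div_eq_left_of_lt hWR_pos hWR⟩
end

section
/- (Theorem 1, strict monotonicity.) Fix any p_0, p_1 with 0 < p_0 < 1, 0 < p_1 < 1 and p_0 ≠ p_1. Then the function λ ↦ B(λ) := max{RR/WR(λ), WR(λ)/RR} is strictly increasing on the interval [0, 1], where RR := p_1/p_0 and WR(λ) := W_λ(p_1)/W_λ(p_0). -/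
section Helpers
open Real Set

lemma aux1 (t : ℝ) (ht : 0 < t) : 0 < Real.exp t * (t - 1) + 1 := by
  rcases le_or_gt 1 t with h | h
  · nlinarith [Real.exp_pos t]
  · have h2 : -t + 1 < Real.exp (-t) := Real.add_one_lt_exp (by linarith)
    have h3 : Real.exp (-t) * Real.exp t = 1 := by rw [← Real.exp_add]; simp
    nlinarith [Real.exp_pos t]

lemma L1 : StrictMonoOn (fun t : ℝ => (Real.exp t - 1) / t) (Set.Ioi 0) := by
  apply strictMonoOn_of_deriv_pos (convex_Ioi 0)
  · exact ContinuousOn.div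
      ((Real.continuous_exp.sub continuous_const).continuousOn) continuousOn_id
      (fun x hx => ne_of_gt hx)
  · intro x hx
    rw [interior_Ioi] at hx
    have hx' : 0 < x := hx
    have hd : HasDerivAt (fun t : ℝ => (Real.exp t - 1) / t)
        ((Real.exp x * x - (Real.exp x - 1) * 1) / x ^ 2) x :=
      ((Real.hasDerivAt_exp x).sub_const 1).div (hasDerivAt_id x) (ne_of_gt hx')
    rw [hd.deriv]
    apply div_pos
    · nlinarith [aux1 x hx']
    · positivity

lemma L3 : StrictAntiOn (fun t : ℝ => (1 - Real.exp (-t)) / t) (Set.Ioi 0) := by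
  apply strictAntiOn_of_deriv_neg (convex_Ioi 0)
  · exact ContinuousOn.div
      (continuousOn_const.sub (Real.continuous_exp.comp continuous_neg).continuousOn)
      continuousOn_id (fun x hx => ne_of_gt hx)
  · intro x hx
    rw [interior_Ioi] at hx
    have hx' : 0 < x := hx
    have hexp : HasDerivAt (fun t : ℝ => Real.exp (-t)) (Real.exp (-x) * (-1)) x :=
      ((hasDerivAt_id x).neg).exp
    have hd : HasDerivAt (fun t : ℝ => (1 - Real.exp (-t)) / t)
        ((-(Real.exp (-x) * (-1)) * x - (1 - Real.exp (-x)) * 1) / x ^ 2) x :=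
      (hexp.const_sub 1).div (hasDerivAt_id x) (ne_of_gt hx')
    rw [hd.deriv]
    apply div_neg_of_neg_of_pos
    · have h2 : x + 1 < Real.exp x := Real.add_one_lt_exp (ne_of_gt hx')
      have h3 : Real.exp (-x) * Real.exp x = 1 := by rw [← Real.exp_add]; simp
      nlinarith [Real.exp_pos (-x), Real.exp_pos x]
    · positivity

lemma psi_pos (c : ℝ) (hc : 1 < c) (x : ℝ) (hx : 1 < x) :
    0 < (c - 1) * x ^ c - c * x ^ (c - 1) + 1 := by
  have hmono : StrictMonoOn
      (fun u : ℝ => (c - 1) * u ^ c - c * u ^ (c - 1) + 1) (Set.Ici 1) := by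
    apply strictMonoOn_of_deriv_pos (convex_Ici 1)
    · apply ContinuousOn.add
      · apply ContinuousOn.sub
        · exact continuousOn_const.mul (continuousOn_id.rpow_const
            (fun y hy => Or.inl (by simp only [id]; intro h; rw [h] at hy; simp at hy; linarith)))
        · exact continuousOn_const.mul (continuousOn_id.rpow_const
            (fun y hy => Or.inl (by simp only [id]; intro h; rw [h] at hy; simp at hy; linarith)))
      · exact continuousOn_const
    · intro u hu
      rw [interior_Ici] at hu
      have hu' : (1:ℝ) < u := hu
      have hu0 : u ≠ 0 := by positivity
      have h1 : HasDerivAt (fun y : ℝ => y ^ c) (c * u ^ (c - 1)) u :=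
        Real.hasDerivAt_rpow_const (Or.inl hu0)
      have h2 : HasDerivAt (fun y : ℝ => y ^ (c - 1)) ((c - 1) * u ^ (c - 1 - 1)) u :=
        Real.hasDerivAt_rpow_const (Or.inl hu0)
      have hd : HasDerivAt (fun y : ℝ => (c - 1) * y ^ c - c * y ^ (c - 1) + 1)
          ((c - 1) * (c * u ^ (c - 1)) - c * ((c - 1) * u ^ (c - 1 - 1))) u :=
        ((h1.const_mul (c - 1)).sub (h2.const_mul c)).add_const 1
      rw [hd.deriv]
      have key : u ^ (c - 1 - 1) < u ^ (c - 1) :=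
        Real.rpow_lt_rpow_of_exponent_lt hu' (by linarith)
      nlinarith [mul_pos (by linarith : (0:ℝ) < c) (by linarith : (0:ℝ) < c - 1),
        sub_pos.mpr key]
  have h0 := hmono (Set.self_mem_Ici) (le_of_lt hx : (1:ℝ) ≤ x) hx
  simp only [Real.one_rpow] at h0
  linarith

lemma L2 (c : ℝ) (hc : 1 < c) :
    StrictMonoOn (fun u : ℝ => (u ^ c - 1) / (u - 1)) (Set.Ioi 1) := by
  apply strictMonoOn_of_deriv_pos (convex_Ioi 1)
  · apply ContinuousOn.div
    · exact (continuousOn_id.rpow_const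
        (fun y hy => Or.inl (by simp only [id]; intro h; rw [h] at hy; simp at hy; linarith))).sub
        continuousOn_const
    · exact continuousOn_id.sub continuousOn_const
    · intro y hy
      have h1y : (1:ℝ) < y := hy
      intro h
      have : y = 1 := by linarith [sub_eq_zero.mp h]
      linarith
  · intro u hu
    rw [interior_Ioi] at hu
    have hu' : (1:ℝ) < u := hu
    have hu0 : (0:ℝ) < u := by linarith
    have hnum : HasDerivAt (fun y : ℝ => y ^ c - 1) (c * u ^ (c - 1)) u :=
      (Real.hasDerivAt_rpow_const (Or.inl (ne_of_gt hu0))).sub_const 1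
    have hden : HasDerivAt (fun y : ℝ => y - 1) 1 u := (hasDerivAt_id u).sub_const 1
    have hd : HasDerivAt (fun y : ℝ => (y ^ c - 1) / (y - 1))
        ((c * u ^ (c - 1) * (u - 1) - (u ^ c - 1) * 1) / (u - 1) ^ 2) u :=
      hnum.div hden (by
        intro h
        have : u = 1 := by linarith [sub_eq_zero.mp h]
        linarith)
    rw [hd.deriv]
    apply div_pos
    · have hpsi := psi_pos c hc u hu'
      have hxc : u ^ (c - 1) * u = u ^ c := by
        rw [← Real.rpow_add_one (ne_of_gt hu0)]
        norm_num
      nlinarith [hpsi, hxc]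
    · have : u - 1 > 0 := by linarith
      positivity

noncomputable def Afun (l X : ℝ) : ℝ := if l = 0 then X else (Real.exp (l * X) - 1) / l

lemma arandaOrdaz_eq (l θ : ℝ) (hθ : θ < 1) :
    arandaOrdaz l θ = Afun l (-Real.log (1 - θ)) := by
  unfold arandaOrdaz Afun
  split
  · rfl
  · have h1θ : (0:ℝ) < 1 - θ := by linarith
    rw [Real.rpow_def_of_pos h1θ]
    have : Real.log (1 - θ) * (-l) = l * -Real.log (1 - θ) := by ring
    rw [this]

lemma Afun_pos (l X : ℝ) (hl : 0 ≤ l) (hX : 0 < X) : 0 < Afun l X := by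
  unfold Afun
  split
  · exact hX
  · rename_i h
    have hl' : 0 < l := lt_of_le_of_ne hl (Ne.symm h)
    apply div_pos _ hl'
    have : Real.exp 0 < Real.exp (l * X) := Real.exp_lt_exp.mpr (by positivity)
    rw [Real.exp_zero] at this
    linarith

lemma Afun_ratio (a X₀ X₁ : ℝ) (ha : 0 < a) :
    Afun a X₁ / Afun a X₀ = (Real.exp (a * X₁) - 1) / (Real.exp (a * X₀) - 1) := by
  unfold Afun
  rw [if_neg (ne_of_gt ha), if_neg (ne_of_gt ha), div_div_div_comm, div_self (ne_of_gt ha),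
    div_one]

lemma ratio_mono (X₀ X₁ : ℝ) (hX0 : 0 < X₀) (hX : X₀ < X₁) :
    StrictMonoOn (fun l => Afun l X₁ / Afun l X₀) (Set.Ici 0) := by
  intro a ha b hb hab
  have ha' : (0:ℝ) ≤ a := ha
  have hb0 : 0 < b := lt_of_le_of_lt ha' hab
  have hX1 : 0 < X₁ := hX0.trans hX
  have hEb0 : 1 < Real.exp (b * X₀) := by
    have : Real.exp 0 < Real.exp (b * X₀) := Real.exp_lt_exp.mpr (by positivity)
    simpa using this
  have hEb1 : 1 < Real.exp (b * X₁) := by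
    have : Real.exp 0 < Real.exp (b * X₁) := Real.exp_lt_exp.mpr (by positivity)
    simpa using this
  simp only
  rw [Afun_ratio b X₀ X₁ hb0]
  rcases eq_or_lt_of_le ha' with h | ha0
  · -- a = 0
    rw [← h]
    have h0 : Afun 0 X₁ / Afun 0 X₀ = X₁ / X₀ := by simp [Afun]
    rw [h0]
    have l1 := L1 (Set.mem_Ioi.mpr (by positivity : (0:ℝ) < b * X₀))
      (Set.mem_Ioi.mpr (by positivity : (0:ℝ) < b * X₁))
      (by nlinarith : b * X₀ < b * X₁)
    simp only at l1
    rw [div_lt_div_iff₀ (by positivity) (by positivity)] at l1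
    rw [div_lt_div_iff₀ hX0 (by linarith : 0 < Real.exp (b * X₀) - 1)]
    have h' : b * (X₁ * (Real.exp (b * X₀) - 1)) < b * ((Real.exp (b * X₁) - 1) * X₀) := by
      linear_combination l1
    exact lt_of_mul_lt_mul_left h' hb0.le
  · -- 0 < a
    rw [Afun_ratio a X₀ X₁ ha0]
    set c := X₁ / X₀ with hc_def
    have hc : 1 < c := (one_lt_div hX0).mpr hX
    have hrp : ∀ t : ℝ, Real.exp (t * X₀) ^ c = Real.exp (t * X₁) := by
      intro t
      rw [Real.rpow_def_of_pos (Real.exp_pos _), Real.log_exp]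
      congr 1
      rw [hc_def]
      field_simp
    have hu01 : Real.exp (a * X₀) < Real.exp (b * X₀) :=
      Real.exp_lt_exp.mpr (by nlinarith)
    have hEa0 : 1 < Real.exp (a * X₀) := by
      have : Real.exp 0 < Real.exp (a * X₀) := Real.exp_lt_exp.mpr (by positivity)
      simpa using this
    have l2 := L2 c hc (Set.mem_Ioi.mpr hEa0) (Set.mem_Ioi.mpr hEb0) hu01
    simp only [hrp] at l2
    exact l2

lemma base_lt (X₀ X₁ : ℝ) (hX0 : 0 < X₀) (hX : X₀ < X₁) :
    (1 - Real.exp (-X₁)) / (1 - Real.exp (-X₀)) < X₁ / X₀ := by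
  have hX1 : 0 < X₁ := hX0.trans hX
  have hp0 : 0 < 1 - Real.exp (-X₀) := by
    have : Real.exp (-X₀) < Real.exp 0 := Real.exp_lt_exp.mpr (by linarith)
    rw [Real.exp_zero] at this; linarith
  have hp1 : 0 < 1 - Real.exp (-X₁) := by
    have : Real.exp (-X₁) < Real.exp 0 := Real.exp_lt_exp.mpr (by linarith)
    rw [Real.exp_zero] at this; linarith
  have l3 := L3 (Set.mem_Ioi.mpr hX0) (Set.mem_Ioi.mpr hX1) hX
  rw [div_lt_div_iff₀ hX1 hX0] at l3
  rw [div_lt_div_iff₀ hp0 hX0]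
  linarith

lemma Bsymm (p₀ p₁ l : ℝ) : B p₁ p₀ l = B p₀ p₁ l := by
  unfold B WR
  rw [max_comm]
  congr 1 <;> (simp only [div_eq_mul_inv, mul_inv, inv_inv]; ring)

lemma main_ordered (p₀ p₁ : ℝ) (h00 : 0 < p₀) (h01 : p₀ < 1)
    (h10 : 0 < p₁) (h11 : p₁ < 1) (hlt : p₀ < p₁) :
    StrictMonoOn (fun l => B p₀ p₁ l) (Set.Icc (0 : ℝ) 1) := by
  set X₀ := -Real.log (1 - p₀) with hX0def
  set X₁ := -Real.log (1 - p₁) with hX1def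
  have h1p₀ : (0:ℝ) < 1 - p₀ := by linarith
  have h1p₁ : (0:ℝ) < 1 - p₁ := by linarith
  have hX0 : 0 < X₀ := by
    have := Real.log_neg h1p₀ (by linarith)
    simp only [hX0def]; linarith
  have hX01 : X₀ < X₁ := by
    have := Real.log_lt_log h1p₁ (by linarith : 1 - p₁ < 1 - p₀)
    simp only [hX0def, hX1def]; linarith
  have hX1 : 0 < X₁ := hX0.trans hX01
  have hWR : ∀ l, WR p₀ p₁ l = Afun l X₁ / Afun l X₀ := by
    intro l
    rw [WR, arandaOrdaz_eq l p₁ h11, arandaOrdaz_eq l p₀ h01]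
  have hRR : 0 < p₁ / p₀ := div_pos h10 h00
  have hp0e : p₀ = 1 - Real.exp (-X₀) := by
    rw [hX0def, neg_neg, Real.exp_log h1p₀]; ring
  have hp1e : p₁ = 1 - Real.exp (-X₁) := by
    rw [hX1def, neg_neg, Real.exp_log h1p₁]; ring
  have hbase : p₁ / p₀ < X₁ / X₀ := by
    calc p₁ / p₀ = (1 - Real.exp (-X₁)) / (1 - Real.exp (-X₀)) := by rw [← hp0e, ← hp1e]
    _ < X₁ / X₀ := base_lt X₀ X₁ hX0 hX01
  have hgt : ∀ l ∈ Set.Icc (0:ℝ) 1, p₁ / p₀ < Afun l X₁ / Afun l X₀ := by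
    intro l hl
    have h0 : Afun 0 X₁ / Afun 0 X₀ = X₁ / X₀ := by simp [Afun]
    rcases eq_or_lt_of_le hl.1 with h | h
    · rw [← h, h0]
      exact hbase
    · have hm := ratio_mono X₀ X₁ hX0 hX01 Set.self_mem_Ici
        (Set.mem_Ici.mpr hl.1) h
      simp only at hm
      rw [h0] at hm
      linarith
  have hB : ∀ l ∈ Set.Icc (0:ℝ) 1,
      B p₀ p₁ l = (Afun l X₁ / Afun l X₀) / (p₁ / p₀) := by
    intro l hl
    rw [B, hWR]
    apply max_eq_right
    have hRpos : 0 < Afun l X₁ / Afun l X₀ := hRR.trans (hgt l hl)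
    have h1 : (p₁ / p₀) / (Afun l X₁ / Afun l X₀) < 1 :=
      (div_lt_one hRpos).mpr (hgt l hl)
    have h2 : 1 < (Afun l X₁ / Afun l X₀) / (p₁ / p₀) :=
      (one_lt_div hRR).mpr (hgt l hl)
    linarith
  intro a ha b hb hab
  simp only
  rw [hB a ha, hB b hb]
  apply div_lt_div_of_pos_right ?_ hRR
  · exact ratio_mono X₀ X₁ hX0 hX01 (Set.mem_Ici.mpr ha.1) (Set.mem_Ici.mpr hb.1) hab

end Helpers

/-- Theorem 1, strict monotonicity: for `0 < p₀, p₁ < 1` with `p₀ ≠ p₁`, the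
function `λ ↦ B(λ)` is strictly increasing on `[0,1]`. -/
theorem theorem1_strictMonoOn (p₀ p₁ : ℝ) (h00 : 0 < p₀) (h01 : p₀ < 1)
    (h10 : 0 < p₁) (h11 : p₁ < 1) (hne : p₀ ≠ p₁) :
    StrictMonoOn (fun l => B p₀ p₁ l) (Set.Icc (0 : ℝ) 1) := by
  rcases hne.lt_or_gt with h | h
  · exact main_ordered p₀ p₁ h00 h01 h10 h11 h
  · intro a ha b hb hab
    have := main_ordered p₁ p₀ h10 h11 h00 h01 h ha hb hab
    simpa [Bsymm] using this
end

section
/- (Corollary 1.) Fix any p_0, p_1 with 0 < p_0 < 1, 0 < p_1 < 1 and p_0 ≠ p_1. Let RR := p_1/p_0, let CLR := log(1 − p_1)/log(1 − p_0), and let OR := (p_1/(1 − p_1))/(p_0/(1 − p_0)). Then max{RR/CLR, CLR/RR} < max{RR/OR, OR/RR}. -/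
/-!
With `a = 1 - p₀` and `b = 1 - p₁`, one has `OR / RR = a / b` and `CLR / RR = g b / g a`, where
`g t = log t / (t - 1)` is the slope of the secant of `log` between `1` and `t`. By strict concavity
of `log` this slope is strictly decreasing, so for `b < a` the ratio `g b / g a` exceeds `1`, and
`t * g t = g t⁻¹` is strictly increasing on `(0, 1)`, which is exactly `g b / g a < a / b`.
-/

open Real Set

noncomputable def logSlope (t : ℝ) : ℝ := log t / (t - 1)

lemma logSlope_strictAntiOn : StrictAntiOn logSlope {t | 0 < t ∧ t ≠ 1} := by
  intro x hx y hy hxy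
  simpa [logSlope] using
    strictConcaveOn_log_Ioi.secant_strict_mono (a := 1) (mem_Ioi.2 one_pos) hx.1 hy.1 hx.2 hy.2 hxy

lemma logSlope_pos {t : ℝ} (h0 : 0 < t) (h1 : t < 1) : 0 < logSlope t :=
  div_pos_of_neg_of_neg (log_neg h0 h1) (by linarith)

lemma mul_logSlope {t : ℝ} (h0 : t ≠ 0) (h1 : t ≠ 1) : t * logSlope t = logSlope t⁻¹ := by
  have h1' : t - 1 ≠ 0 := sub_ne_zero.2 h1
  have h1'' : t⁻¹ - 1 ≠ 0 := sub_ne_zero.2 (inv_ne_one.2 h1)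
  simp only [logSlope, log_inv]
  field_simp
  ring

lemma mul_logSlope_strictMonoOn : StrictMonoOn (fun t => t * logSlope t) (Ioo 0 1) := by
  intro x hx y hy hxy
  simp only [mul_logSlope hx.1.ne' hx.2.ne, mul_logSlope hy.1.ne' hy.2.ne]
  refine logSlope_strictAntiOn ⟨inv_pos.2 hy.1, inv_ne_one.2 hy.2.ne⟩
    ⟨inv_pos.2 hx.1, inv_ne_one.2 hx.2.ne⟩ (inv_strictAnti₀ hx.1 hxy)

lemma max_div_lt_max_div_of_strictAntiOn {f : ℝ → ℝ} {s : Set ℝ} (hs : s ⊆ Ioi 0)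
    (hpos : ∀ t ∈ s, 0 < f t) (hf : StrictAntiOn f s)
    (hg : StrictMonoOn (fun t => t * f t) s) {x y : ℝ} (hx : x ∈ s) (hy : y ∈ s) (hxy : x ≠ y) :
    max (f x / f y) (f y / f x) < max (x / y) (y / x) := by
  wlog h : x < y generalizing x y
  · rw [max_comm, max_comm (x / y)]
    exact this hy hx hxy.symm (lt_of_le_of_ne (not_lt.1 h) hxy.symm)
  have hx0 : 0 < x := hs hx
  have hfx := hpos x hx
  have hfy := hpos y hy
  have hyx : 1 < y / x := (one_lt_div hx0).2 h
  have hyx_lt : f y / f x < y / x := ((div_lt_one hfx).2 (hf hx hy h)).trans hyx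
  have hxy_lt : f x / f y < y / x := by
    rw [div_lt_div_iff₀ hfy hx0]
    linarith [hg hx hy h]
  exact (max_lt hxy_lt hyx_lt).trans_le (le_max_right _ _)

/-- Corollary 1: for `0 < p₀, p₁ < 1` with `p₀ ≠ p₁`, the complementary log ratio
`CLR = log(1-p₁)/log(1-p₀)` approximates the risk ratio `RR = p₁/p₀` strictly better
(in maximum relative discrepancy) than the odds ratio
`OR = (p₁/(1-p₁))/(p₀/(1-p₀))`. -/
theorem corollary1_CLR_better_than_OR (p₀ p₁ : ℝ) (h00 : 0 < p₀) (h01 : p₀ < 1)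
    (h10 : 0 < p₁) (h11 : p₁ < 1) (hne : p₀ ≠ p₁) :
    max ((p₁ / p₀) / (Real.log (1 - p₁) / Real.log (1 - p₀)))
        ((Real.log (1 - p₁) / Real.log (1 - p₀)) / (p₁ / p₀))
      <
    max ((p₁ / p₀) / ((p₁ / (1 - p₁)) / (p₀ / (1 - p₀))))
        (((p₁ / (1 - p₁)) / (p₀ / (1 - p₀))) / (p₁ / p₀)) := by
  have ha : 1 - p₀ ∈ Ioo (0 : ℝ) 1 := ⟨by linarith, by linarith⟩
  have hb : 1 - p₁ ∈ Ioo (0 : ℝ) 1 := ⟨by linarith, by linarith⟩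
  have key := max_div_lt_max_div_of_strictAntiOn (fun _ ht => ht.1)
    (fun _ ht => logSlope_pos ht.1 ht.2)
    (logSlope_strictAntiOn.mono fun _ ht => ⟨ht.1, ht.2.ne⟩) mul_logSlope_strictMonoOn ha hb
    (by intro h; apply hne; linarith)
  rw [max_comm (_ / _) ((1 - p₁) / _)] at key
  have hla := (log_neg ha.1 ha.2).ne
  have hlb := (log_neg hb.1 hb.2).ne
  have hRR_CLR : (p₁ / p₀) / (log (1 - p₁) / log (1 - p₀))
      = logSlope (1 - p₀) / logSlope (1 - p₁) := by
    unfold logSlope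
    rw [sub_sub_cancel_left, sub_sub_cancel_left]
    field_simp
  have hRR_OR : (p₁ / p₀) / ((p₁ / (1 - p₁)) / (p₀ / (1 - p₀))) = (1 - p₁) / (1 - p₀) := by
    field_simp
  rwa [← inv_div (p₁ / p₀), ← inv_div (p₁ / p₀), hRR_CLR, hRR_OR, inv_div, inv_div]
end

section
/- Let a and b be real numbers with 0 < a < b. Then the function λ ↦ (e^{λb} − 1)/(e^{λa} − 1) is strictly increasing on (0, ∞). -/
/-!
With `x = e^{λa}` and `p = b/a > 1` the ratio is `(x^p - 1)/(x - 1)`, the slope of the secant of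
the strictly convex function `x ↦ x^p` between `1` and `x`. Such slopes increase strictly with `x`,
and `x = e^{λa}` increases strictly with `λ`.
-/

open Real Set

theorem strictMonoOn_rpow_sub_one_div_sub_one {p : ℝ} (hp : 1 < p) :
    StrictMonoOn (fun x : ℝ => (x ^ p - 1) / (x - 1)) (Ici 0 \ {1}) := by
  rintro x ⟨hx, hx1⟩ y ⟨hy, hy1⟩ hxy
  simpa only [one_rpow] using (strictConvexOn_rpow hp).secant_strict_mono
    (mem_Ici.2 zero_le_one) hx hy hx1 hy1 hxy

/-- For `0 < a < b`, the function `λ ↦ (e^{λb} - 1)/(e^{λa} - 1)` is strictly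
increasing on `(0, ∞)`. -/
theorem strictMonoOn_exp_ratio (a b : ℝ) (ha : 0 < a) (hab : a < b) :
    StrictMonoOn (fun l : ℝ => (Real.exp (l * b) - 1) / (Real.exp (l * a) - 1))
      (Set.Ioi (0 : ℝ)) := by
  have hp : 1 < b / a := (one_lt_div ha).2 hab
  have hexp_mem : ∀ l ∈ Ioi (0 : ℝ), exp (l * a) ∈ Ici 0 \ {1} := fun l hl =>
    ⟨(exp_pos _).le, (one_lt_exp_iff.2 (mul_pos hl ha)).ne'⟩
  have hexp_mono : StrictMono fun l : ℝ => exp (l * a) :=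
    exp_strictMono.comp (strictMono_mul_right_of_pos ha)
  have hratio : ∀ l : ℝ, exp (l * b) = exp (l * a) ^ (b / a) := fun l => by
    rw [← exp_mul, mul_assoc, mul_div_cancel₀ b ha.ne']
  intro l hl m hm hlm
  simpa only [hratio] using strictMonoOn_rpow_sub_one_div_sub_one hp
    (hexp_mem l hl) (hexp_mem m hm) (hexp_mono hlm)
end

section
/- The function h(x) := x·e^x/(e^x − 1) is strictly increasing on the interval (0, ∞). -/
open Real

/-! The derivative `e^x (e^x - 1 - x) / (e^x - 1)^2` is positive for `x ≠ 0`, since `e^x > 1 + x`. -/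

lemma exp_sub_one_ne_zero {x : ℝ} (hx : x ≠ 0) : exp x - 1 ≠ 0 :=
  sub_ne_zero.mpr ((exp_eq_one_iff x).not.mpr hx)

lemma hasDerivAt_mul_exp_div_exp_sub_one {x : ℝ} (hx : x ≠ 0) :
    HasDerivAt (fun x => x * exp x / (exp x - 1))
      (exp x * (exp x - 1 - x) / (exp x - 1) ^ 2) x := by
  have hnum : HasDerivAt (fun x => x * exp x) (1 * exp x + x * exp x) x :=
    (hasDerivAt_id' x).mul (hasDerivAt_exp x)
  have hden : HasDerivAt (fun x => exp x - 1) (exp x) x := (hasDerivAt_exp x).sub_const 1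
  exact (hnum.div hden (exp_sub_one_ne_zero hx)).congr_deriv (by ring)

lemma deriv_mul_exp_div_exp_sub_one_pos {x : ℝ} (hx : x ≠ 0) :
    0 < deriv (fun x => x * exp x / (exp x - 1)) x := by
  rw [(hasDerivAt_mul_exp_div_exp_sub_one hx).deriv]
  have hgap : 0 < exp x - 1 - x := by linarith [add_one_lt_exp hx]
  exact div_pos (mul_pos (exp_pos x) hgap) (sq_pos_of_ne_zero (exp_sub_one_ne_zero hx))

/-- The function `h(x) = x·e^x/(e^x - 1)` is strictly increasing on `(0, ∞)`. -/
theorem strictMonoOn_h :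
    StrictMonoOn (fun x : ℝ => x * Real.exp x / (Real.exp x - 1)) (Set.Ioi (0 : ℝ)) := by
  refine strictMonoOn_of_deriv_pos (convex_Ioi 0) (fun x hx => ?_) (fun x hx => ?_)
  · exact (hasDerivAt_mul_exp_div_exp_sub_one hx.ne').continuousAt.continuousWithinAt
  · rw [interior_Ioi] at hx
    exact deriv_mul_exp_div_exp_sub_one_pos hx.ne'
end

section
/- Let 0 < p_0 < p_1 < 1. Then the function λ ↦ WR(λ) := W_λ(p_1)/W_λ(p_0) is strictly increasing on the interval [0, 1]; in particular, for every λ with 0 < λ ≤ 1, the complementary log ratio CLR = WR(0) = log(1 − p_1)/log(1 − p_0) satisfies CLR < WR(λ). -/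
/-!
Put `r := log (1 - p₁) / log (1 - p₀)`, so that `1 - p₁ = (1 - p₀) ^ r` and `r > 1`. With
`u := (1 - p₀) ^ (-λ)` one gets `WR(λ) = (u ^ r - 1) / (u - 1)`, the slope of the secant of the
strictly convex function `u ↦ u ^ r` between `1` and `u`; at `λ = 0` (`u = 1`) it becomes the
tangent slope `r = CLR`. Secant slopes of a strictly convex function from a fixed point increase
with the other end point, and `λ ↦ u` is increasing, so `WR` is strictly increasing.
-/

open Real Set

theorem StrictConvexOn.strictMonoOn_dslope {S : Set ℝ} {f : ℝ → ℝ} {a : ℝ}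
    (hf : StrictConvexOn ℝ S f) (ha : a ∈ S) (hfa : DifferentiableAt ℝ f a) :
    StrictMonoOn (dslope f a) S := by
  intro x hx y hy hxy
  rcases eq_or_ne x a with rfl | hxa
  · rw [dslope_same, dslope_of_ne f hxy.ne']
    exact hf.deriv_lt_slope hx hy hxy hfa
  rcases eq_or_ne y a with rfl | hya
  · rw [dslope_same, dslope_of_ne f hxy.ne, slope_comm]
    exact hf.slope_lt_deriv hx hy hxy hfa
  rw [dslope_of_ne f hxa, dslope_of_ne f hya, slope_def_field, slope_def_field]
  exact hf.secant_strict_mono ha hx hy hxa hya hxy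

theorem strictMonoOn_dslope_rpow_one {r : ℝ} (hr : 1 < r) :
    StrictMonoOn (dslope (fun u : ℝ => u ^ r) 1) (Ici 0) :=
  (strictConvexOn_rpow hr).strictMonoOn_dslope (mem_Ici.2 zero_le_one)
    (differentiableAt_rpow_const_of_ne r one_ne_zero)

theorem WR_zero (p₀ p₁ : ℝ) : WR p₀ p₁ 0 = logb (1 - p₀) (1 - p₁) := by
  simp [WR, arandaOrdaz, logb]

theorem WR_eq_dslope_rpow {p₀ p₁ : ℝ} (h0 : 0 < p₀) (h0' : p₀ < 1) (h1 : p₁ < 1) (l : ℝ) :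
    WR p₀ p₁ l = dslope (fun u : ℝ => u ^ logb (1 - p₀) (1 - p₁)) 1 ((1 - p₀) ^ (-l)) := by
  rcases eq_or_ne l 0 with rfl | hl
  · rw [neg_zero, rpow_zero, dslope_same, Real.deriv_rpow_const, one_rpow, mul_one, WR_zero]
  have hq₀ : 0 < 1 - p₀ := by linarith
  have hq₀' : 1 - p₀ ≠ 1 := by linarith
  have hu : (1 - p₀) ^ (-l) ≠ 1 := fun h =>
    hl (neg_eq_zero.1 ((rpow_right_inj hq₀ hq₀').1 (h.trans (rpow_zero _).symm)))
  rw [dslope_of_ne _ hu, slope_def_field, one_rpow, ← rpow_mul hq₀.le, mul_comm, rpow_mul hq₀.le,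
    rpow_logb hq₀ hq₀' (by linarith)]
  simp only [WR, arandaOrdaz, if_neg hl]
  exact div_div_div_cancel_right₀ hl _ _

theorem WR_strictMono {p₀ p₁ : ℝ} (h0 : 0 < p₀) (h01 : p₀ < p₁) (h1 : p₁ < 1) :
    StrictMono (WR p₀ p₁) := by
  have hq₀ : 0 < 1 - p₀ := by linarith
  have hq₀' : 1 - p₀ < 1 := by linarith
  have hr : 1 < logb (1 - p₀) (1 - p₁) :=
    (lt_logb_iff_rpow_lt_of_base_lt_one hq₀ hq₀' (by linarith)).2 (by rw [rpow_one]; linarith)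
  intro s t hst
  rw [WR_eq_dslope_rpow h0 (h01.trans h1) h1, WR_eq_dslope_rpow h0 (h01.trans h1) h1]
  exact strictMonoOn_dslope_rpow_one hr (rpow_nonneg hq₀.le _) (rpow_nonneg hq₀.le _)
    (strictAnti_rpow_of_base_lt_one hq₀ hq₀' (neg_lt_neg hst))

/-- For `0 < p₀ < p₁ < 1`, the function `λ ↦ WR(λ)` is strictly increasing on
`[0,1]`; in particular `CLR = WR(0) = log(1-p₁)/log(1-p₀) < WR(λ)` for every
`λ ∈ (0,1]`. -/
theorem WR_strictMonoOn (p₀ p₁ : ℝ) (h0 : 0 < p₀) (h01 : p₀ < p₁) (h1 : p₁ < 1) :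
    StrictMonoOn (fun l => WR p₀ p₁ l) (Set.Icc (0 : ℝ) 1) ∧
    ∀ l : ℝ, 0 < l → l ≤ 1 →
      Real.log (1 - p₁) / Real.log (1 - p₀) < WR p₀ p₁ l := by
  have hWR := WR_strictMono h0 h01 h1
  exact ⟨hWR.strictMonoOn _, fun l hl _ => (WR_zero p₀ p₁).symm.trans_lt (hWR hl)⟩
end

section
/- Let 0 < p_0 < p_1 < 1. Then the chain of strict inequalities p_1/p_0 < log(1 − p_1)/log(1 − p_0) < (p_1/(1 − p_1))/(p_0/(1 − p_0)) holds; that is, RR < CLR < OR, so the complementary log ratio lies strictly between the risk ratio and the odds ratio. -/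
/-!
Both inequalities compare secant slopes through the point `1`, after the substitution
`q = 1 - p`: the slope `log q / (q - 1)` of the concave function `log` decreases in `q`, which
gives `RR < CLR`, and the slope `q log q / (q - 1)` of the convex function `q log q` increases in
`q`, which gives `CLR < OR`.
-/

open Real Set

lemma log_one_sub_div_lt_log_one_sub_div {p q : ℝ} (hp : p ≠ 0) (hq : q ≠ 0) (hpq : p < q)
    (hq1 : q < 1) : log (1 - q) / q < log (1 - p) / p := by
  have h := strictConcaveOn_log_Ioi.secant_strict_mono (a := 1) (x := 1 - q) (y := 1 - p)
    (mem_Ioi.2 one_pos) (mem_Ioi.2 (sub_pos.2 hq1)) (mem_Ioi.2 (sub_pos.2 (hpq.trans hq1)))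
    (by simpa using hq) (by simpa using hp) (by linarith)
  simpa [neg_div_neg_eq, div_neg] using h

lemma one_sub_mul_log_one_sub_div_lt_one_sub_mul_log_one_sub_div {p q : ℝ} (hp : p ≠ 0)
    (hq : q ≠ 0) (hpq : p < q) (hq1 : q ≤ 1) :
    (1 - p) * log (1 - p) / p < (1 - q) * log (1 - q) / q := by
  have h := strictConvexOn_mul_log.secant_strict_mono (a := 1) (x := 1 - q) (y := 1 - p)
    (mem_Ici.2 zero_le_one) (mem_Ici.2 (sub_nonneg.2 hq1)) (mem_Ici.2 (by linarith))
    (by simpa using hq) (by simpa using hp) (by linarith)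
  simpa [div_neg] using h

/-- For `0 < p₀ < p₁ < 1`: `RR < CLR < OR`, i.e. the complementary log ratio lies
strictly between the risk ratio and the odds ratio. -/
theorem RR_lt_CLR_lt_OR (p₀ p₁ : ℝ) (h0 : 0 < p₀) (h01 : p₀ < p₁) (h1 : p₁ < 1) :
    p₁ / p₀ < Real.log (1 - p₁) / Real.log (1 - p₀) ∧
    Real.log (1 - p₁) / Real.log (1 - p₀) < (p₁ / (1 - p₁)) / (p₀ / (1 - p₀)) := by
  have hp₁ : 0 < p₁ := h0.trans h01
  have hq₀ : 0 < 1 - p₀ := by linarith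
  have hq₁ : 0 < 1 - p₁ := by linarith
  have hL₀ : log (1 - p₀) < 0 := log_neg hq₀ (by linarith)
  have hRR := log_one_sub_div_lt_log_one_sub_div h0.ne' hp₁.ne' h01 h1
  have hOR := one_sub_mul_log_one_sub_div_lt_one_sub_mul_log_one_sub_div
    h0.ne' hp₁.ne' h01 h1.le
  rw [div_lt_div_iff₀ hp₁ h0] at hRR
  rw [div_lt_div_iff₀ h0 hp₁] at hOR
  constructor
  · rw [lt_div_iff_of_neg hL₀, div_mul_eq_mul_div, lt_div_iff₀ h0]
    linarith
  · rw [div_lt_iff_of_neg hL₀, div_div_div_eq, div_mul_eq_mul_div,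
      div_lt_iff₀ (mul_pos hq₁ h0)]
    linarith
end

section
/- Let 0 < p_1 < p_0 < 1. Then the chain of strict inequalities (p_1/(1 − p_1))/(p_0/(1 − p_0)) < log(1 − p_1)/log(1 − p_0) < p_1/p_0 holds; that is, OR < CLR < RR, so when the risk ratio is below one, the odds ratio underestimates it more severely than the complementary log ratio. -/
/-! Both inequalities are instances of the strict concavity of `log` between `1` and a point `x`:
`s * log x < log (s * x + (1 - s))` for `0 < s < 1`.
Taking `x = 1 - p₀` and `s = p₁ / p₀` gives `log (1 - p₁) > RR * log (1 - p₀)`, while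
`x = 1 / (1 - p₀)` and `s = OR` give `-log (1 - p₁) > -OR * log (1 - p₀)`;
dividing by `log (1 - p₀) < 0` yields `OR < CLR < RR`. -/

open Real

lemma mul_log_lt_log_mul_add_one_sub {s x : ℝ} (hx : 0 < x) (hx1 : x ≠ 1)
    (hs0 : 0 < s) (hs1 : s < 1) : s * log x < log (s * x + (1 - s)) := by
  have h := strictConcaveOn_log_Ioi.2 (Set.mem_Ioi.2 hx) (Set.mem_Ioi.2 one_pos) hx1 hs0
    (sub_pos.2 hs1) (add_sub_cancel s 1)
  simpa only [smul_eq_mul, mul_one, log_one, mul_zero, add_zero] using h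

section

variable {p₀ p₁ : ℝ}

lemma log_one_sub_div_log_one_sub_lt_div (h0 : 0 < p₁) (h10 : p₁ < p₀) (h1 : p₀ < 1) :
    log (1 - p₁) / log (1 - p₀) < p₁ / p₀ := by
  have hp₀ : 0 < p₀ := h0.trans h10
  have hcomb : p₁ / p₀ * (1 - p₀) + (1 - p₁ / p₀) = 1 - p₁ := by field_simp; ring
  have key := mul_log_lt_log_mul_add_one_sub (x := 1 - p₀) (by linarith) (by linarith)
    (div_pos h0 hp₀) ((div_lt_one hp₀).2 h10)
  rw [hcomb] at key
  exact (div_lt_iff_of_neg (log_neg (by linarith) (by linarith))).2 key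

lemma odds_ratio_lt_log_one_sub_div_log_one_sub (h0 : 0 < p₁) (h10 : p₁ < p₀) (h1 : p₀ < 1) :
    (p₁ / (1 - p₁)) / (p₀ / (1 - p₀)) < log (1 - p₁) / log (1 - p₀) := by
  have hp₀ : 0 < p₀ := h0.trans h10
  have hq₀ : 0 < 1 - p₀ := by linarith
  have hq₁ : 0 < 1 - p₁ := by linarith
  set s := (p₁ / (1 - p₁)) / (p₀ / (1 - p₀))
  have hs0 : 0 < s := by positivity
  have hs1 : s < 1 := by
    rw [div_lt_one (by positivity), div_lt_div_iff₀ hq₁ hq₀]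
    nlinarith
  have hx1 : 1 / (1 - p₀) ≠ 1 := by
    rw [Ne, div_eq_one_iff_eq hq₀.ne']
    linarith
  have hcomb : s * (1 / (1 - p₀)) + (1 - s) = 1 / (1 - p₁) := by
    simp only [s]; field_simp; ring
  have key := mul_log_lt_log_mul_add_one_sub (by positivity) hx1 hs0 hs1
  rw [hcomb, one_div, one_div, log_inv, log_inv] at key
  exact (lt_div_iff_of_neg (log_neg hq₀ (by linarith))).2 (by linarith)

end

/-- For `0 < p₁ < p₀ < 1`: `OR < CLR < RR`, i.e. when the risk ratio is below one,
the odds ratio underestimates it more severely than the complementary log ratio. -/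
theorem OR_lt_CLR_lt_RR (p₀ p₁ : ℝ) (h0 : 0 < p₁) (h10 : p₁ < p₀) (h1 : p₀ < 1) :
    (p₁ / (1 - p₁)) / (p₀ / (1 - p₀)) < Real.log (1 - p₁) / Real.log (1 - p₀) ∧
    Real.log (1 - p₁) / Real.log (1 - p₀) < p₁ / p₀ :=
  ⟨odds_ratio_lt_log_one_sub_div_log_one_sub h0 h10 h1,
    log_one_sub_div_log_one_sub_lt_div h0 h10 h1⟩
end

section
/- (Minimality of the complementary log-log model within the Aranda-Ordaz family.) Fix any p_0, p_1 with 0 < p_0 < 1, 0 < p_1 < 1 and p_0 ≠ p_1. Then for every λ with 0 < λ ≤ 1, B(0) < B(λ); that is, λ = 0 (the complementary log-log transformation) uniquely minimizes the relative discrepancy B over [0, 1]. -/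
/-!
Write `x = W₀(p) = -log (1 - p)` and `g t = (exp t - 1) / t`. Then `p = x g(-x)` and
`W_λ(p) = x g(λx)`, so with `xᵢ = W₀(pᵢ)`
  `WR(λ) / RR = (g(λx₁) / g(λx₀)) · (g(-x₀) / g(-x₁))`, while `WR(0) / RR = g(-x₀) / g(-x₁)`.
Since `g` is strictly increasing (it is a secant slope of the convex function `exp`), for
`p₀ < p₁` both factors exceed `1`; hence `B(0) = WR(0)/RR < WR(λ)/RR ≤ B(λ)`.
The case `p₁ < p₀` follows because `B` is symmetric in `p₀, p₁`.
-/

open Real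

noncomputable def expSlope (t : ℝ) : ℝ := (exp t - 1) / t

lemma mul_expSlope (t : ℝ) : t * expSlope t = exp t - 1 := by
  rcases eq_or_ne t 0 with rfl | ht
  · simp
  · exact mul_div_cancel₀ _ ht

lemma expSlope_pos {t : ℝ} (ht : t ≠ 0) : 0 < expSlope t := by
  rcases ht.lt_or_gt with h | h
  · exact div_pos_of_neg_of_neg (by linarith [exp_lt_one_iff.2 h]) h
  · exact div_pos (by linarith [one_lt_exp_iff.2 h]) h

lemma expSlope_lt_expSlope {s t : ℝ} (hs : s ≠ 0) (ht : t ≠ 0) (hst : s < t) :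
    expSlope s < expSlope t := by
  simpa [expSlope] using strictConvexOn_exp.secant_strict_mono (Set.mem_univ 0)
    (Set.mem_univ s) (Set.mem_univ t) hs ht hst

lemma arandaOrdaz_zero_apply (p : ℝ) : arandaOrdaz 0 p = -log (1 - p) := if_pos rfl

lemma arandaOrdaz_zero_strictMonoOn : StrictMonoOn (arandaOrdaz 0) (Set.Iio 1) := by
  intro p hp q hq hpq
  simp only [arandaOrdaz_zero_apply, neg_lt_neg_iff]
  exact log_lt_log (sub_pos.2 hq) (by linarith)

lemma arandaOrdaz_zero_pos {p : ℝ} (hp₀ : 0 < p) (hp₁ : p < 1) : 0 < arandaOrdaz 0 p := by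
  simpa [arandaOrdaz_zero_apply] using
    arandaOrdaz_zero_strictMonoOn (by norm_num : (0 : ℝ) ∈ Set.Iio 1) hp₁ hp₀

lemma exp_neg_arandaOrdaz_zero {p : ℝ} (hp : p < 1) : exp (-arandaOrdaz 0 p) = 1 - p := by
  rw [arandaOrdaz_zero_apply, neg_neg, exp_log (sub_pos.2 hp)]

lemma eq_arandaOrdaz_zero_mul_expSlope {p : ℝ} (hp : p < 1) :
    p = arandaOrdaz 0 p * expSlope (-arandaOrdaz 0 p) := by
  have h := mul_expSlope (-arandaOrdaz 0 p)
  rw [exp_neg_arandaOrdaz_zero hp, neg_mul] at h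
  linarith

lemma arandaOrdaz_eq_mul_expSlope {l p : ℝ} (hl : l ≠ 0) (hp : p < 1) :
    arandaOrdaz l p = arandaOrdaz 0 p * expSlope (l * arandaOrdaz 0 p) := by
  have hpow : (1 - p) ^ (-l) = exp (l * arandaOrdaz 0 p) := by
    rw [← exp_neg_arandaOrdaz_zero hp, ← exp_mul]
    ring_nf
  rw [arandaOrdaz, if_neg hl, hpow, ← mul_expSlope, mul_comm l, mul_assoc, mul_div_assoc,
    mul_div_cancel_left₀ _ hl]

lemma WR_eq_mul_WR_zero {p₀ p₁ l : ℝ} (hl : l ≠ 0) (hp₀ : p₀ < 1) (hp₁ : p₁ < 1) :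
    WR p₀ p₁ l = expSlope (l * arandaOrdaz 0 p₁) / expSlope (l * arandaOrdaz 0 p₀) *
      WR p₀ p₁ 0 := by
  rw [WR, WR, arandaOrdaz_eq_mul_expSlope hl hp₀, arandaOrdaz_eq_mul_expSlope hl hp₁,
    mul_div_mul_comm, mul_comm]

lemma div_eq_mul_WR_zero {p₀ p₁ : ℝ} (hp₀ : p₀ < 1) (hp₁ : p₁ < 1) :
    p₁ / p₀ = expSlope (-arandaOrdaz 0 p₁) / expSlope (-arandaOrdaz 0 p₀) * WR p₀ p₁ 0 := by
  conv_lhs => rw [eq_arandaOrdaz_zero_mul_expSlope hp₀, eq_arandaOrdaz_zero_mul_expSlope hp₁]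
  rw [WR, mul_div_mul_comm, mul_comm]

lemma B_comm (p₀ p₁ l : ℝ) : B p₀ p₁ l = B p₁ p₀ l := by
  rw [B, B, WR, WR, max_comm]
  congr 1 <;> simp only [div_eq_mul_inv, mul_inv, inv_inv] <;> ring

lemma B_zero_lt_of_lt {p₀ p₁ l : ℝ} (hp₀ : 0 < p₀) (hp₁ : p₁ < 1) (hlt : p₀ < p₁)
    (hl : 0 < l) : B p₀ p₁ 0 < B p₀ p₁ l := by
  set x₀ := arandaOrdaz 0 p₀
  set x₁ := arandaOrdaz 0 p₁
  have hx₀ : 0 < x₀ := arandaOrdaz_zero_pos hp₀ (hlt.trans hp₁)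
  have hx₁ : 0 < x₁ := arandaOrdaz_zero_pos (hp₀.trans hlt) hp₁
  have hx : x₀ < x₁ := arandaOrdaz_zero_strictMonoOn (hlt.trans hp₁) hp₁ hlt
  set c := expSlope (-x₀) / expSlope (-x₁)
  set k := expSlope (l * x₁) / expSlope (l * x₀)
  have hc : 1 < c := (one_lt_div (expSlope_pos (by linarith))).2 <|
    expSlope_lt_expSlope (by linarith) (by linarith) (by linarith)
  have hk : 1 < k := (one_lt_div (expSlope_pos (by positivity))).2 <|
    expSlope_lt_expSlope (by positivity) (by positivity) (by nlinarith)
  have hRR : p₁ / p₀ = c⁻¹ * WR p₀ p₁ 0 := by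
    rw [div_eq_mul_WR_zero (hlt.trans hp₁) hp₁, inv_div]
  have hWR : WR p₀ p₁ l = k * WR p₀ p₁ 0 := WR_eq_mul_WR_zero hl.ne' (hlt.trans hp₁) hp₁
  have hWR₀ : 0 < WR p₀ p₁ 0 := div_pos hx₁ hx₀
  have hB₀ : B p₀ p₁ 0 = c := by
    have hinv : c⁻¹ * WR p₀ p₁ 0 / WR p₀ p₁ 0 = c⁻¹ := by field_simp
    have hself : WR p₀ p₁ 0 / (c⁻¹ * WR p₀ p₁ 0) = c := by field_simp
    rw [B, hRR, hinv, hself]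
    exact max_eq_right (inv_le_one_of_one_le₀ hc.le |>.trans hc.le)
  calc B p₀ p₁ 0 = c := hB₀
    _ < k * c := lt_mul_left (by linarith) hk
    _ = WR p₀ p₁ l / (p₁ / p₀) := by
      rw [hWR, hRR]
      field_simp
    _ ≤ B p₀ p₁ l := le_max_right _ _

/-- Minimality of the complementary log-log model within the Aranda-Ordaz family:
for `0 < p₀, p₁ < 1` with `p₀ ≠ p₁`, `B(0) < B(λ)` for every `λ ∈ (0,1]`. -/
theorem B_zero_min (p₀ p₁ : ℝ) (h00 : 0 < p₀) (h01 : p₀ < 1)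
    (h10 : 0 < p₁) (h11 : p₁ < 1) (hne : p₀ ≠ p₁) :
    ∀ l : ℝ, 0 < l → l ≤ 1 → B p₀ p₁ 0 < B p₀ p₁ l := by
  intro l hl _
  rcases hne.lt_or_gt with hlt | hgt
  · exact B_zero_lt_of_lt h00 h11 hlt hl
  · rw [B_comm, B_comm p₀]
    exact B_zero_lt_of_lt h10 h01 hgt hl
end
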